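/- arXiv:2211.11942 — 4 statements merged into one kernel-verified Lean document; each statement's English description precedes it below -/
import Mathlib

section
/- If a thread t is enabled in a state s of a deterministic LTS satisfying the independence axioms and the action of next(s, t) is invisible (independent of every action of every other thread), then the singleton {t} is a source set for s. -/
/-- A labeled transition system over states `S`, actions `A`, and thread ids `T`. -/
structure LTS (S A T : Type) where
  tr : S → A → S → Prop
  tid : A → T

namespace LTS

variable {S A T : Type}

/-- Determinism: for every state and thread there is at most one outgoing transition
labeled by an action of that thread. -/
def Deterministic (L : LTS S A T) : Prop :=
  ∀ ⦃s a a' s1 s2⦄, L.tr s a s1 → L.tr s a' s2 → L.tid a = L.tid a' → a = a' ∧ s1 = s2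

/-- Thread `t` is enabled in state `s`. -/
def Enabled (L : LTS S A T) (s : S) (t : T) : Prop :=
  ∃ a s', L.tr s a s' ∧ L.tid a = t

/-- The set of threads enabled in `s`. -/
def enabledSet (L : LTS S A T) (s : S) : Set T := {t | L.Enabled s t}

/-- A state is final if no thread is enabled in it. -/
def Final (L : LTS S A T) (s : S) : Prop := ∀ t, ¬ L.Enabled s t

end LTS

/-- Executions of a transition relation `R` from a state: a list of (action, next state)
pairs forming an alternating sequence of states and actions. -/
inductive ExecOf {S A : Type} (R : S → A → S → Prop) : S → List (A × S) → Prop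
  | nil (s : S) : ExecOf R s []
  | cons {s : S} {a : A} {s' : S} {E : List (A × S)} :
      R s a s' → ExecOf R s' E → ExecOf R s ((a, s') :: E)

/-- Executions of the LTS `L` from a state. -/
def LTS.IsExec {S A T : Type} (L : LTS S A T) : S → List (A × S) → Prop := ExecOf L.tr

/-- The state in which an execution from `s` ends. -/
def endState {S A : Type} (s : S) (E : List (A × S)) : S := (E.map Prod.snd).getLastD s

/-- `ind` is an independence relation for `L`: symmetric, and independent actions have
distinct thread ids. -/
def IndepRel {S A T : Type} (L : LTS S A T) (ind : A → A → Prop) : Prop :=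
  (∀ a a', ind a a' → ind a' a) ∧ (∀ a a', ind a a' → L.tid a ≠ L.tid a')

/-- Commutation axiom: consecutive independent transitions can be swapped,
reaching the same state. -/
def Commutation {S A T : Type} (L : LTS S A T) (ind : A → A → Prop) : Prop :=
  ∀ a a' s s1 s2, ind a a' → L.tr s a s1 → L.tr s1 a' s2 →
    ∃ s1', L.tr s a' s1' ∧ L.tr s1' a s2

/-- Enabledness preservation axiom: executing a transition independent of the transition
of another enabled thread keeps that thread enabled with the same action. -/
def EnabledPreserved {S A T : Type} (L : LTS S A T) (ind : A → A → Prop) : Prop :=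
  ∀ s a s1 a' s1', L.tr s a s1 → L.tr s a' s1' → L.tid a ≠ L.tid a' → ind a a' →
    ∃ s2, L.tr s1 a' s2

/-- An action is invisible if it is independent of every action of every other thread. -/
def Invisible {S A T : Type} (L : LTS S A T) (ind : A → A → Prop) (a : A) : Prop :=
  ∀ a', L.tid a' ≠ L.tid a → ind a a'

/-- A single swap of two consecutive transitions labeled by independent actions,
both sides being executions from `s`. -/
inductive SwapExec {S A T : Type} (L : LTS S A T) (ind : A → A → Prop) (s : S) :
    List (A × S) → List (A × S) → Prop
  | swap (u v : List (A × S)) (a a' : A) (x y x' : S) :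
      ind a a' →
      L.IsExec s (u ++ (a, x) :: (a', y) :: v) →
      L.IsExec s (u ++ (a', x') :: (a, y) :: v) →
      SwapExec L ind s (u ++ (a, x) :: (a', y) :: v) (u ++ (a', x') :: (a, y) :: v)

/-- The smallest equivalence relation containing `r`. -/
inductive EqvClosure {α : Type} (r : α → α → Prop) : α → α → Prop
  | rel {x y : α} : r x y → EqvClosure r x y
  | refl (x : α) : EqvClosure r x x
  | symm {x y : α} : EqvClosure r x y → EqvClosure r y x
  | trans {x y z : α} : EqvClosure r x y → EqvClosure r y z → EqvClosure r x z

/-- Two executions from `s` are equivalent if one is obtained from the other by a finite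
sequence of swaps of consecutive independent transitions. -/
def ExecEquiv {S A T : Type} (L : LTS S A T) (ind : A → A → Prop) (s : S) :
    List (A × S) → List (A × S) → Prop :=
  EqvClosure (SwapExec L ind s)

/-- Thread `t` is a weak initial of execution `E` from `s`: some equivalent execution
starts with a transition of `t`. -/
def WeakInitial {S A T : Type} (L : LTS S A T) (ind : A → A → Prop) (s : S)
    (E : List (A × S)) (t : T) : Prop :=
  ∃ E', L.IsExec s E' ∧ ExecEquiv L ind s E E' ∧
    ∃ p rest, E' = p :: rest ∧ L.tid p.1 = t

/-- `Q` is a source set for `s`: every nonempty execution from `s` ending in a final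
state has a weak initial thread in `Q`. -/
def IsSourceSet {S A T : Type} (L : LTS S A T) (ind : A → A → Prop) (s : S)
    (Q : Set T) : Prop :=
  ∀ E, L.IsExec s E → E ≠ [] → L.Final (endState s E) →
    ∃ t ∈ Q, WeakInitial L ind s E t

/-- `P ⊆ enabled(s)` is a persistent set for `s`: in every execution from `s` whose
actions all have thread ids outside `P`, every action is independent of the action of
`next(s, t)` for every `t ∈ P`. -/
def IsPersistentSet {S A T : Type} (L : LTS S A T) (ind : A → A → Prop) (s : S)
    (P : Set T) : Prop :=
  (∀ t ∈ P, L.Enabled s t) ∧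
  ∀ E, L.IsExec s E → (∀ p ∈ E, L.tid p.1 ∉ P) →
    ∀ p ∈ E, ∀ t ∈ P, ∀ a s', L.tr s a s' → L.tid a = t → ind p.1 a

/-- Acyclicity: no execution visits the same state twice. -/
def Acyclic {S A T : Type} (L : LTS S A T) : Prop :=
  ∀ s E, L.IsExec s E → (s :: E.map Prod.snd).Nodup

/-- `s'` is reachable from `s` via transitions of the relation `R`. -/
def ReachableVia {S A : Type} (R : S → A → S → Prop) (s s' : S) : Prop :=
  ∃ E, ExecOf R s E ∧ endState s E = s'

section Aux

variable {S A T : Type}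

lemma endState_cons (s x : S) (a : A) (E : List (A × S)) :
    endState s ((a, x) :: E) = endState x E := by
  simp only [endState, List.map_cons, List.getLastD_cons]

lemma exec_append_split {R : S → A → S → Prop} :
    ∀ (u : List (A × S)) (s : S) (v : List (A × S)), ExecOf R s (u ++ v) →
      ExecOf R s u ∧ ExecOf R (endState s u) v := by
  intro u
  induction u with
  | nil => intro s v h; exact ⟨ExecOf.nil s, by simpa [endState] using h⟩
  | cons p u ih =>
    rintro s v h
    obtain ⟨a, x⟩ := p
    cases h with
    | cons h1 h2 =>
      obtain ⟨hu, hv⟩ := ih x v h2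
      exact ⟨ExecOf.cons h1 hu, by rwa [endState_cons]⟩

lemma exec_append_join {R : S → A → S → Prop} :
    ∀ (u : List (A × S)) (s : S) (v : List (A × S)), ExecOf R s u →
      ExecOf R (endState s u) v → ExecOf R s (u ++ v) := by
  intro u
  induction u with
  | nil => intro s v _ h; simpa [endState] using h
  | cons p u ih =>
    rintro s v h hv
    obtain ⟨a, x⟩ := p
    cases h with
    | cons h1 h2 =>
      exact ExecOf.cons h1 (ih x v h2 (by rwa [endState_cons] at hv))

lemma enabled_along (L : LTS S A T) (ind : A → A → Prop) (hind : IndepRel L ind)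
    (hen : EnabledPreserved L ind) :
    ∀ (E : List (A × S)) (s : S), ExecOf L.tr s E → ∀ a s', L.tr s a s' →
      Invisible L ind a → (∀ p ∈ E, L.tid p.1 ≠ L.tid a) →
      ∃ w, L.tr (endState s E) a w := by
  intro E
  induction E with
  | nil => intro s _ a s' h _ _; exact ⟨s', by simpa [endState] using h⟩
  | cons p E ih =>
    rintro s hE a s' ha hinv hall
    obtain ⟨c, x⟩ := p
    cases hE with
    | cons h1 h2 =>
      have hne : L.tid c ≠ L.tid a := hall (c, x) (by simp)
      have hca : ind c a := hind.1 a c (hinv c hne)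
      obtain ⟨s2, hs2⟩ := hen s c x a s' h1 ha hne hca
      rw [endState_cons]
      exact ih x h2 a s2 hs2 hinv (fun p hp => hall p (by simp [hp]))

lemma exists_first (L : LTS S A T) (t : T) :
    ∀ (E : List (A × S)), (∃ p ∈ E, L.tid p.1 = t) →
      ∃ u b y v, E = u ++ (b, y) :: v ∧ L.tid b = t ∧ ∀ p ∈ u, L.tid p.1 ≠ t := by
  intro E
  induction E with
  | nil => rintro ⟨p, hp, _⟩; simp at hp
  | cons p E ih =>
    rintro ⟨q, hq, hqt⟩
    by_cases hp : L.tid p.1 = t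
    · exact ⟨[], p.1, p.2, E, by simp, hp, by simp⟩
    · have : ∃ q ∈ E, L.tid q.1 = t := by
        rcases List.mem_cons.mp hq with hq | hq
        · exact absurd (hq ▸ hqt) hp
        · exact ⟨q, hq, hqt⟩
      obtain ⟨u, b, y, v, hE, hbt, hu⟩ := ih this
      exact ⟨p :: u, b, y, v, by simp [hE], hbt, by
        intro r hr'
        rcases List.mem_cons.mp hr' with hr | hr
        · exact hr ▸ hp
        · exact hu r hr⟩

lemma bubble (L : LTS S A T) (ind : A → A → Prop) (hind : IndepRel L ind)
    (hcomm : Commutation L ind) (s : S) (a : A) (hinv : Invisible L ind a) :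
    ∀ (u : List (A × S)), ∀ (y : S) (v : List (A × S)),
      L.IsExec s (u ++ (a, y) :: v) → (∀ p ∈ u, L.tid p.1 ≠ L.tid a) →
      ∃ z rest, L.IsExec s ((a, z) :: rest) ∧
        ExecEquiv L ind s (u ++ (a, y) :: v) ((a, z) :: rest) := by
  intro u
  induction u using List.reverseRecOn with
  | nil =>
    intro y v h _
    exact ⟨y, v, h, EqvClosure.refl _⟩
  | append_singleton u p ih =>
    rintro y v h hall
    obtain ⟨c, x⟩ := p
    have hne : L.tid c ≠ L.tid a := hall (c, x) (by simp)
    have hca : ind c a := hind.1 a c (hinv c hne)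
    rw [List.append_assoc] at h
    obtain ⟨hu, hv⟩ := exec_append_split u s _ h
    cases hv with
    | cons h1 h2 =>
      cases h2 with
      | cons h3 h4 =>
        obtain ⟨x', hx'1, hx'2⟩ := hcomm c a _ _ _ hca h1 h3
        have hswapped : L.IsExec s (u ++ (a, x') :: (c, y) :: v) :=
          exec_append_join u s _ hu (ExecOf.cons hx'1 (ExecOf.cons hx'2 h4))
        have hstep : SwapExec L ind s (u ++ (c, x) :: (a, y) :: v)
            (u ++ (a, x') :: (c, y) :: v) :=
          SwapExec.swap u v c a x y x' hca h hswapped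
        obtain ⟨z, rest, hz1, hz2⟩ := ih x' ((c, y) :: v) hswapped
          (fun p hp => hall p (by simp [hp]))
        refine ⟨z, rest, hz1, ?_⟩
        rw [List.append_assoc]
        exact EqvClosure.trans (EqvClosure.rel hstep) hz2

end Aux

/-- If a thread `t` is enabled in a state `s` of a deterministic LTS
satisfying the independence axioms and the action of `next(s, t)` is invisible
(independent of every action of every other thread), then the singleton `{t}` is a
source set for `s`. -/
theorem invisible_singleton_isSourceSet {S A T : Type} (L : LTS S A T)
    (ind : A → A → Prop) (hdet : L.Deterministic) (hind : IndepRel L ind)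
    (hcomm : Commutation L ind) (hen : EnabledPreserved L ind)
    (s : S) (t : T) (a : A) (s' : S)
    (htr : L.tr s a s') (hta : L.tid a = t) (hinv : Invisible L ind a) :
    IsSourceSet L ind s {t} := by
  intro E hE _ hfin
  refine ⟨t, rfl, ?_⟩
  -- some action in E has tid t, else a stays enabled at the final end state
  have hocc : ∃ p ∈ E, L.tid p.1 = t := by
    by_contra hno
    push_neg at hno
    obtain ⟨w, hw⟩ := enabled_along L ind hind hen E s hE a s' htr hinv
      (fun p hp => by rw [hta]; exact hno p hp)
    exact hfin t ⟨a, w, hw, hta⟩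
  obtain ⟨u, b, y, v, rfl, hbt, hu⟩ := exists_first L t E hocc
  -- the tid-t action in the middle must be `a` by determinism
  obtain ⟨hu', hv'⟩ := exec_append_split u s _ hE
  obtain ⟨w, hw⟩ := enabled_along L ind hind hen u s hu' a s' htr hinv
    (fun p hp => by rw [hta]; exact hu p hp)
  cases hv' with
  | cons h1 h2 =>
    obtain ⟨hba, _⟩ := hdet h1 hw (by rw [hbt, hta])
    subst hba
    obtain ⟨z, rest, hz1, hz2⟩ := bubble L ind hind hcomm s b hinv u y v hE
      (fun p hp => by rw [hbt]; exact hu p hp)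
    exact ⟨(b, z) :: rest, hz1, hz2, (b, z), rest, rfl, hbt⟩
end

section
/- If w and w' are swap-equivalent lists over an alphabet with an independence relation and w is duplicate-free, then w' is a permutation of w, and for all dependent letters a, b occurring in w, a precedes b in w if and only if a precedes b in w'. -/
/-- A single swap of two adjacent independent letters. -/
inductive SwapStep {A : Type} (I : A → A → Prop) : List A → List A → Prop
  | swap (u v : List A) (a b : A) : I a b →
      SwapStep I (u ++ a :: b :: v) (u ++ b :: a :: v)

/-- Swap-equivalence: the smallest equivalence relation on lists relating
`u ++ [a, b] ++ v` and `u ++ [b, a] ++ v` whenever `I a b`. -/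
def SwapEquiv {A : Type} (I : A → A → Prop) : List A → List A → Prop :=
  EqvClosure (SwapStep I)

/-- For a duplicate-free list, `a` precedes `b` in `w` if the occurrence of `a` is at a
smaller index than the occurrence of `b`. -/
def Precedes {A : Type} (w : List A) (a b : A) : Prop :=
  ∃ i j : ℕ, i < j ∧ w[i]? = some a ∧ w[j]? = some b

lemma getElem?_swapAux {A : Type} (u v : List A) (x y : A) (k : ℕ) :
    (u ++ x :: y :: v)[k]? =
      (u ++ y :: x :: v)[if k = u.length then u.length + 1
        else if k = u.length + 1 then u.length else k]? := by
  rcases lt_trichotomy k u.length with h | h | h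
  · rw [if_neg (by omega), if_neg (by omega)]
    simp [List.getElem?_append, h]
  · subst h
    rw [if_pos rfl, List.getElem?_append_right le_rfl,
      List.getElem?_append_right (by omega)]
    simp
  · by_cases h1 : k = u.length + 1
    · subst h1
      rw [if_neg (by omega), if_pos rfl, List.getElem?_append_right (by omega),
        List.getElem?_append_right le_rfl]
      simp
    · rw [if_neg (by omega), if_neg h1,
        List.getElem?_append_right (by omega), List.getElem?_append_right (by omega)]
      obtain ⟨m, hm⟩ : ∃ m, k - u.length = m + 2 := ⟨k - u.length - 2, by omega⟩
      rw [hm]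
      simp

lemma precedes_swapStep {A : Type} {I : A → A → Prop} {c d : A} (hI : ¬ I c d)
    {w w' : List A} (hs : SwapStep I w w') : Precedes w c d → Precedes w' c d := by
  rcases hs with ⟨u, v, x, y, hxy⟩
  rintro ⟨i, j, hij, hi, hj⟩
  by_cases hc : i = u.length ∧ j = u.length + 1
  · exfalso
    obtain ⟨hi', hj'⟩ := hc
    subst hi'; subst hj'
    rw [List.getElem?_append_right le_rfl] at hi
    rw [List.getElem?_append_right (by omega)] at hj
    simp at hi hj
    subst hi; subst hj
    exact hI hxy
  · refine ⟨if i = u.length then u.length + 1 else if i = u.length + 1 then u.length else i,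
      if j = u.length then u.length + 1 else if j = u.length + 1 then u.length else j,
      by split_ifs <;> omega, ?_, ?_⟩
    · rw [← getElem?_swapAux]; exact hi
    · rw [← getElem?_swapAux]; exact hj

lemma swapStep_symm {A : Type} {I : A → A → Prop} (hsymm : ∀ a b, I a b → I b a)
    {w w' : List A} (hs : SwapStep I w w') : SwapStep I w' w := by
  rcases hs with ⟨u, v, x, y, hxy⟩
  exact SwapStep.swap u v y x (hsymm _ _ hxy)

lemma swapStep_perm {A : Type} {I : A → A → Prop}
    {w w' : List A} (hs : SwapStep I w w') : w.Perm w' := by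
  rcases hs with ⟨u, v, x, y, _⟩
  exact List.Perm.append_left u (List.Perm.swap y x v)

lemma swapEquiv_main {A : Type} {I : A → A → Prop} (hsymm : ∀ a b, I a b → I b a)
    {w w' : List A} (h : SwapEquiv I w w') :
    w.Perm w' ∧ ∀ c d, ¬ I c d → (Precedes w c d ↔ Precedes w' c d) := by
  induction h with
  | rel hs =>
      exact ⟨swapStep_perm hs, fun c d hI =>
        ⟨precedes_swapStep hI hs, precedes_swapStep hI (swapStep_symm hsymm hs)⟩⟩
  | refl x => exact ⟨List.Perm.refl _, fun _ _ _ => Iff.rfl⟩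
  | symm _ ih => exact ⟨ih.1.symm, fun c d hI => (ih.2 c d hI).symm⟩
  | trans _ _ ih1 ih2 =>
      exact ⟨ih1.1.trans ih2.1, fun c d hI => (ih1.2 c d hI).trans (ih2.2 c d hI)⟩

/-- If `w` and `w'` are swap-equivalent lists over an alphabet with an
independence relation and `w` is duplicate-free, then `w'` is a permutation of `w`, and
for all dependent letters `a, b` occurring in `w`, `a` precedes `b` in `w` if and only
if `a` precedes `b` in `w'`. -/
theorem swapEquiv_perm_and_order {A : Type} (I : A → A → Prop)
    (hsymm : ∀ a b, I a b → I b a) (hirr : ∀ a, ¬ I a a)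
    (w w' : List A) (h : SwapEquiv I w w') (hnd : w.Nodup) :
    w'.Perm w ∧
      ∀ a b, a ∈ w → b ∈ w → a ≠ b → ¬ I a b →
        (Precedes w a b ↔ Precedes w' a b) := by
  obtain ⟨hp, ho⟩ := swapEquiv_main hsymm h
  exact ⟨hp.symm, fun a b _ _ _ hI => ho a b hI⟩
end

section
/- Mazurkiewicz's characterization of trace equivalence: if w and w' are duplicate-free lists over an alphabet with an independence relation such that w' is a permutation of w and, for every pair of dependent letters a, b occurring in w, a precedes b in w if and only if a precedes b in w', then w and w' are swap-equivalent. -/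
namespace Maz

variable {A : Type} {I : A → A → Prop}

lemma swapEquiv_cons (c : A) {l1 l2 : List A} (h : SwapEquiv I l1 l2) :
    SwapEquiv I (c :: l1) (c :: l2) := by
  induction h with
  | rel h => cases h with
    | swap u v a b hab => exact .rel (SwapStep.swap (c :: u) v a b hab)
  | refl => exact .refl _
  | symm _ ih => exact .symm ih
  | trans _ _ ih1 ih2 => exact .trans ih1 ih2

lemma bubble (a : A) (u v : List A) (h : ∀ b ∈ u, I a b) :
    SwapEquiv I (a :: (u ++ v)) (u ++ a :: v) := by
  induction u with
  | nil => exact .refl _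
  | cons b u ih =>
    have step : SwapStep I ([] ++ a :: b :: (u ++ v)) ([] ++ b :: a :: (u ++ v)) :=
      SwapStep.swap [] (u ++ v) a b (h b (by simp))
    refine EqvClosure.trans (.rel step) ?_
    exact swapEquiv_cons b (ih fun c hc => h c (by simp [hc]))

lemma getElem?_mem {l : List A} {i : ℕ} {a : A} (h : l[i]? = some a) :
    a ∈ l ∧ i < l.length := by
  rw [List.getElem?_eq_some_iff] at h
  obtain ⟨h1, h2⟩ := h
  exact ⟨h2 ▸ List.getElem_mem h1, h1⟩

lemma nodup_index_unique {l : List A} (hnd : l.Nodup) {i j : ℕ} {a : A}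
    (hi : l[i]? = some a) (hj : l[j]? = some a) : i = j := by
  rw [List.getElem?_eq_some_iff] at hi hj
  obtain ⟨hi1, hi2⟩ := hi
  obtain ⟨hj1, hj2⟩ := hj
  exact (List.Nodup.getElem_inj_iff hnd).mp (hi2.trans hj2.symm)

lemma getElem?_mid_lt (u v : List A) (c : A) {i : ℕ} (h : i < u.length) :
    (u ++ c :: v)[i]? = (u ++ v)[i]? := by
  rw [List.getElem?_append_left h, List.getElem?_append_left h]

lemma getElem?_mid_gt (u v : List A) (c : A) {i : ℕ} (h : u.length < i) :
    (u ++ c :: v)[i]? = (u ++ v)[i - 1]? := by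
  rw [List.getElem?_append_right (by omega), List.getElem?_append_right (by omega)]
  have h1 : i - u.length = (i - u.length - 1) + 1 := by omega
  rw [h1, List.getElem?_cons_succ]
  congr 1
  omega

lemma precedes_mid (u v : List A) (c a b : A) (ha : a ≠ c) (hb : b ≠ c) :
    Precedes (u ++ c :: v) a b ↔ Precedes (u ++ v) a b := by
  constructor
  · rintro ⟨i, j, hij, hi, hj⟩
    have hine : i ≠ u.length := by
      rintro rfl
      rw [List.getElem?_append_right le_rfl] at hi
      simp at hi
      exact ha hi.symm
    have hjne : j ≠ u.length := by
      rintro rfl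
      rw [List.getElem?_append_right le_rfl] at hj
      simp at hj
      exact hb hj.symm
    refine ⟨if i < u.length then i else i - 1, if j < u.length then j else j - 1, ?_, ?_, ?_⟩
    · split <;> split <;> omega
    · by_cases h : i < u.length
      · rw [if_pos h]; rwa [getElem?_mid_lt u v c h] at hi
      · rw [if_neg h]; rwa [getElem?_mid_gt u v c (by omega)] at hi
    · by_cases h : j < u.length
      · rw [if_pos h]; rwa [getElem?_mid_lt u v c h] at hj
      · rw [if_neg h]; rwa [getElem?_mid_gt u v c (by omega)] at hj
  · rintro ⟨i, j, hij, hi, hj⟩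
    refine ⟨if i < u.length then i else i + 1, if j < u.length then j else j + 1, ?_, ?_, ?_⟩
    · split <;> split <;> omega
    · by_cases h : i < u.length
      · rw [if_pos h, getElem?_mid_lt u v c h]; exact hi
      · rw [if_neg h, getElem?_mid_gt u v c (by omega)]; simpa using hi
    · by_cases h : j < u.length
      · rw [if_pos h, getElem?_mid_lt u v c h]; exact hj
      · rw [if_neg h, getElem?_mid_gt u v c (by omega)]; simpa using hj

lemma precedes_head {x b : A} {t : List A} (hb : b ∈ t) : Precedes (x :: t) x b := by
  obtain ⟨k, hk, hkb⟩ := List.mem_iff_getElem.mp hb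
  refine ⟨0, k + 1, by omega, by simp, ?_⟩
  rw [List.getElem?_cons_succ, List.getElem?_eq_getElem hk, hkb]

end Maz

/-- Mazurkiewicz's characterization of trace equivalence: if `w` and `w'`
are duplicate-free lists such that `w'` is a permutation of `w` and, for every pair of
dependent letters `a, b` occurring in `w`, `a` precedes `b` in `w` iff `a` precedes `b`
in `w'`, then `w` and `w'` are swap-equivalent. -/
theorem perm_order_swapEquiv {A : Type} (I : A → A → Prop)
    (hsymm : ∀ a b, I a b → I b a) (hirr : ∀ a, ¬ I a a)
    (w w' : List A) (hnd : w.Nodup) (hnd' : w'.Nodup) (hperm : w'.Perm w)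
    (horder : ∀ a b, a ∈ w → b ∈ w → a ≠ b → ¬ I a b →
      (Precedes w a b ↔ Precedes w' a b)) :
    SwapEquiv I w w' := by
  induction w generalizing w' with
  | nil =>
    rw [List.perm_nil.mp hperm]
    exact .refl _
  | cons x t ih =>
    -- x occurs in w'
    have hxw' : x ∈ w' := hperm.mem_iff.mpr (by simp)
    obtain ⟨u, v, rfl⟩ := List.append_of_mem hxw'
    have hndt : t.Nodup := (List.nodup_cons.mp hnd).2
    have hxnt : x ∉ t := (List.nodup_cons.mp hnd).1
    have hnduv : (u ++ v).Nodup :=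
      ((List.sublist_cons_self x v).append_left u).nodup hnd'
    have hxu : x ∉ u := fun hxu =>
      (List.disjoint_of_nodup_append hnd') hxu (by simp)
    have hxv : x ∉ v := by
      have := (List.nodup_append.mp (by simpa using hnd' : (u ++ x :: v).Nodup)).2.1
      exact (List.nodup_cons.mp this).1
    -- every element of u is independent of x
    have hIu : ∀ b ∈ u, I x b := by
      intro b hb
      by_contra hIb
      have hbw' : b ∈ u ++ x :: v := by simp [hb]
      have hbw : b ∈ x :: t := hperm.mem_iff.mp hbw'
      have hbx : b ≠ x := fun h => hxu (h ▸ hb)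
      have hbt : b ∈ t := by
        rcases List.mem_cons.mp hbw with h | h
        · exact absurd h hbx
        · exact h
      have hprec : Precedes (x :: t) x b := Maz.precedes_head hbt
      have hprec' : Precedes (u ++ x :: v) x b :=
        (horder x b (by simp) hbw (Ne.symm hbx) hIb).mp hprec
      obtain ⟨i, j, hij, hi, hj⟩ := hprec'
      -- i must be u.length
      have hix : (u ++ x :: v)[u.length]? = some x := by
        rw [List.getElem?_append_right le_rfl]
        simp
      have hieq : i = u.length := Maz.nodup_index_unique hnd' hi hix
      -- j must be the index of b in u
      obtain ⟨k, hk, hkb⟩ := List.mem_iff_getElem.mp hb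
      have hjb : (u ++ x :: v)[k]? = some b := by
        rw [List.getElem?_append_left hk, List.getElem?_eq_getElem hk, hkb]
      have hjeq : j = k := Maz.nodup_index_unique hnd' hj hjb
      omega
    -- permutation: t ~ u ++ v
    have hperm2 : (u ++ v).Perm t := by
      have h1 : (u ++ x :: v).Perm (x :: (u ++ v)) := List.perm_middle
      exact (h1.symm.trans hperm).cons_inv
    -- apply IH
    have horder2 : ∀ a b, a ∈ t → b ∈ t → a ≠ b → ¬ I a b →
        (Precedes t a b ↔ Precedes (u ++ v) a b) := by
      intro a b hat hbt hab hIab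
      have hax : a ≠ x := fun h => hxnt (h ▸ hat)
      have hbx : b ≠ x := fun h => hxnt (h ▸ hbt)
      have h1 : Precedes (x :: t) a b ↔ Precedes t a b :=
        Maz.precedes_mid [] t x a b hax hbx
      have h2 : Precedes (u ++ x :: v) a b ↔ Precedes (u ++ v) a b :=
        Maz.precedes_mid u v x a b hax hbx
      rw [← h1, ← h2]
      exact horder a b (by simp [hat]) (by simp [hbt]) hab hIab
    have hmain : SwapEquiv I t (u ++ v) :=
      ih (u ++ v) hndt hnduv hperm2 horder2
    -- chain: x :: t ~ x :: (u ++ v) ~ u ++ x :: v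
    exact EqvClosure.trans (Maz.swapEquiv_cons x hmain) (Maz.bubble x u v hIu)
end

section
/- Source sets can be strictly weaker than persistent sets: there exist a finite acyclic deterministic LTS satisfying the independence axioms, a state s, and a set of threads Q ⊆ enabled(s) such that Q is a source set for s but Q is not a persistent set for s. -/
-- ==================== Counterexample construction ====================

abbrev S3 := Bool × Bool × Bool

def get3 (s : S3) : Fin 3 → Bool
  | 0 => s.1
  | 1 => s.2.1
  | 2 => s.2.2

def set3 (s : S3) : Fin 3 → S3
  | 0 => (true, s.2.1, s.2.2)
  | 1 => (s.1, true, s.2.2)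
  | 2 => (s.1, s.2.1, true)

@[reducible] def tr3 (s : S3) (a : Fin 3) (s' : S3) : Prop :=
  get3 s a = false ∧ s' = set3 s a

abbrev L3 : LTS S3 (Fin 3) (Fin 3) := ⟨tr3, id⟩

@[reducible] def ind3 (a a' : Fin 3) : Prop := a ≠ a' ∧ (a = 2 ∨ a' = 2)

def rank3 (s : S3) : ℕ := (cond s.1 1 0) + (cond s.2.1 1 0) + (cond s.2.2 1 0)

lemma tr3_rank : ∀ s a s', tr3 s a s' → rank3 s < rank3 s' := by decide

lemma exec_chain : ∀ {s E}, ExecOf tr3 s E →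
    List.Chain' (fun x y => rank3 x < rank3 y) (s :: E.map Prod.snd) := by
  intro s E h
  induction h with
  | nil => exact List.isChain_singleton _
  | cons hstep _ ih =>
    rw [List.map_cons]
    exact List.isChain_cons_cons.mpr ⟨tr3_rank _ _ _ hstep, ih⟩

-- step enumeration lemmas
lemma stepO : ∀ a s1, tr3 (false,false,false) a s1 →
    a = 0 ∧ s1 = (true,false,false) ∨ a = 1 ∧ s1 = (false,true,false) ∨
    a = 2 ∧ s1 = (false,false,true) := by decide
lemma stepW : ∀ a s1, tr3 (true,false,false) a s1 →
    a = 1 ∧ s1 = (true,true,false) ∨ a = 2 ∧ s1 = (true,false,true) := by decide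
lemma stepB : ∀ a s1, tr3 (false,true,false) a s1 →
    a = 0 ∧ s1 = (true,true,false) ∨ a = 2 ∧ s1 = (false,true,true) := by decide
lemma stepC : ∀ a s1, tr3 (false,false,true) a s1 →
    a = 0 ∧ s1 = (true,false,true) ∨ a = 1 ∧ s1 = (false,true,true) := by decide
lemma stepWB : ∀ a s1, tr3 (true,true,false) a s1 → a = 2 ∧ s1 = (true,true,true) := by decide
lemma stepWC : ∀ a s1, tr3 (true,false,true) a s1 → a = 1 ∧ s1 = (true,true,true) := by decide
lemma stepBC : ∀ a s1, tr3 (false,true,true) a s1 → a = 0 ∧ s1 = (true,true,true) := by decide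
lemma stepT : ∀ a s1, tr3 (true,true,true) a s1 → False := by decide

-- the six maximal executions
def E012 : List (Fin 3 × S3) := [(0,(true,false,false)),(1,(true,true,false)),(2,(true,true,true))]
def E021 : List (Fin 3 × S3) := [(0,(true,false,false)),(2,(true,false,true)),(1,(true,true,true))]
def E102 : List (Fin 3 × S3) := [(1,(false,true,false)),(0,(true,true,false)),(2,(true,true,true))]
def E120 : List (Fin 3 × S3) := [(1,(false,true,false)),(2,(false,true,true)),(0,(true,true,true))]
def E201 : List (Fin 3 × S3) := [(2,(false,false,true)),(0,(true,false,true)),(1,(true,true,true))]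
def E210 : List (Fin 3 × S3) := [(2,(false,false,true)),(1,(false,true,true)),(0,(true,true,true))]

def s0 : S3 := (false,false,false)

lemma exec012 : L3.IsExec s0 E012 :=
  ExecOf.cons ⟨rfl,rfl⟩ (ExecOf.cons ⟨rfl,rfl⟩ (ExecOf.cons ⟨rfl,rfl⟩ (ExecOf.nil _)))
lemma exec021 : L3.IsExec s0 E021 :=
  ExecOf.cons ⟨rfl,rfl⟩ (ExecOf.cons ⟨rfl,rfl⟩ (ExecOf.cons ⟨rfl,rfl⟩ (ExecOf.nil _)))
lemma exec102 : L3.IsExec s0 E102 :=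
  ExecOf.cons ⟨rfl,rfl⟩ (ExecOf.cons ⟨rfl,rfl⟩ (ExecOf.cons ⟨rfl,rfl⟩ (ExecOf.nil _)))
lemma exec120 : L3.IsExec s0 E120 :=
  ExecOf.cons ⟨rfl,rfl⟩ (ExecOf.cons ⟨rfl,rfl⟩ (ExecOf.cons ⟨rfl,rfl⟩ (ExecOf.nil _)))
lemma exec201 : L3.IsExec s0 E201 :=
  ExecOf.cons ⟨rfl,rfl⟩ (ExecOf.cons ⟨rfl,rfl⟩ (ExecOf.cons ⟨rfl,rfl⟩ (ExecOf.nil _)))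
lemma exec210 : L3.IsExec s0 E210 :=
  ExecOf.cons ⟨rfl,rfl⟩ (ExecOf.cons ⟨rfl,rfl⟩ (ExecOf.cons ⟨rfl,rfl⟩ (ExecOf.nil _)))

-- swaps
lemma swap120_210 : SwapExec L3 ind3 s0 E120 E210 :=
  SwapExec.swap [] [((0:Fin 3),((true,true,true):S3))] 1 2
    (false,true,false) (false,true,true) (false,false,true)
    (by decide) exec120 exec210

lemma swap102_120 : SwapExec L3 ind3 s0 E102 E120 :=
  SwapExec.swap [((1:Fin 3),((false,true,false):S3))] [] 0 2
    (true,true,false) (true,true,true) (false,true,true)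
    (by decide) exec102 exec120

def Q3 : Set (Fin 3) := {t | t = 0 ∨ t = 2}

lemma wi_self (E : List (Fin 3 × S3)) (hE : L3.IsExec s0 E) (p : Fin 3 × S3)
    (rest : List (Fin 3 × S3)) (h : E = p :: rest) :
    WeakInitial L3 ind3 s0 E (L3.tid p.1) :=
  ⟨E, hE, EqvClosure.refl _, p, rest, h, rfl⟩

lemma get_set : ∀ (s : S3) (a a' : Fin 3), a ≠ a' → get3 (set3 s a) a' = get3 s a' := by decide
lemma set_comm : ∀ (s : S3) (a a' : Fin 3), set3 (set3 s a) a' = set3 (set3 s a') a := by decide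

lemma comm3 : Commutation L3 ind3 := by
  intro a a' s s1 s2 hind h1 h2
  obtain ⟨ha, rfl⟩ := h1
  obtain ⟨ha', rfl⟩ := h2
  have hne : a ≠ a' := hind.1
  refine ⟨set3 s a', ⟨by rw [← get_set s a a' hne]; exact ha', rfl⟩,
    by rw [get_set s a' a hne.symm]; exact ha, set_comm s a a'⟩

lemma enpres3 : EnabledPreserved L3 ind3 := by
  intro s a s1 a' s1' h1 h2 hne _
  obtain ⟨ha, rfl⟩ := h1
  obtain ⟨ha', _⟩ := h2
  exact ⟨set3 (set3 s a) a', by rw [get_set s a a' hne]; exact ha', rfl⟩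

/-- Source sets can be strictly weaker than persistent sets: there exist
a finite acyclic deterministic LTS satisfying the independence axioms, a state `s`, and
a set of threads `Q ⊆ enabled(s)` such that `Q` is a source set for `s` but `Q` is not
a persistent set for `s`. -/
theorem exists_sourceSet_not_persistentSet :
    ∃ (S A T : Type) (L : LTS S A T) (ind : A → A → Prop),
      Finite S ∧ L.Deterministic ∧ IndepRel L ind ∧
      Commutation L ind ∧ EnabledPreserved L ind ∧ Acyclic L ∧
      ∃ (s : S) (Q : Set T), Q ⊆ L.enabledSet s ∧
        IsSourceSet L ind s Q ∧ ¬ IsPersistentSet L ind s Q := by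
  refine ⟨S3, Fin 3, Fin 3, L3, ind3, inferInstance, ?_, ?_, ?_, ?_, ?_, s0, Q3, ?_, ?_, ?_⟩
  · unfold LTS.Deterministic; decide
  · unfold IndepRel; exact ⟨by decide, by decide⟩
  · exact comm3
  · exact enpres3
  · -- Acyclic
    intro s E h
    have hc := exec_chain h
    haveI : IsTrans S3 (fun x y => rank3 x < rank3 y) := ⟨fun _ _ _ => Nat.lt_trans⟩
    have hp := List.isChain_iff_pairwise.mp hc
    exact hp.imp (fun hlt he => absurd (he ▸ hlt) (lt_irrefl _))
  · -- Q ⊆ enabled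
    intro t ht
    rcases ht with rfl | rfl
    · exact ⟨0, (true,false,false), ⟨rfl,rfl⟩, rfl⟩
    · exact ⟨2, (false,false,true), ⟨rfl,rfl⟩, rfl⟩
  · -- source set
    intro E hE hne hfin
    cases hE with
    | nil => exact absurd rfl hne
    | cons htr hrest =>
      rcases stepO _ _ htr with ⟨rfl, rfl⟩ | ⟨rfl, rfl⟩ | ⟨rfl, rfl⟩
      · -- first action 0
        cases hrest with
        | nil => exact absurd ⟨1,(true,true,false),⟨rfl,rfl⟩,rfl⟩ (hfin 1)
        | cons htr2 hrest2 =>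
          rcases stepW _ _ htr2 with ⟨rfl,rfl⟩ | ⟨rfl,rfl⟩
          · cases hrest2 with
            | nil => exact absurd ⟨2,(true,true,true),⟨rfl,rfl⟩,rfl⟩ (hfin 2)
            | cons htr3 hrest3 =>
              obtain ⟨rfl,rfl⟩ := stepWB _ _ htr3
              cases hrest3 with
              | nil => exact ⟨0, Or.inl rfl, wi_self E012 exec012 _ _ rfl⟩
              | cons htr4 _ => exact (stepT _ _ htr4).elim
          · cases hrest2 with
            | nil => exact absurd ⟨1,(true,true,true),⟨rfl,rfl⟩,rfl⟩ (hfin 1)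
            | cons htr3 hrest3 =>
              obtain ⟨rfl,rfl⟩ := stepWC _ _ htr3
              cases hrest3 with
              | nil => exact ⟨0, Or.inl rfl, wi_self E021 exec021 _ _ rfl⟩
              | cons htr4 _ => exact (stepT _ _ htr4).elim
      · -- first action 1
        cases hrest with
        | nil => exact absurd ⟨0,(true,true,false),⟨rfl,rfl⟩,rfl⟩ (hfin 0)
        | cons htr2 hrest2 =>
          rcases stepB _ _ htr2 with ⟨rfl,rfl⟩ | ⟨rfl,rfl⟩
          · cases hrest2 with
            | nil => exact absurd ⟨2,(true,true,true),⟨rfl,rfl⟩,rfl⟩ (hfin 2)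
            | cons htr3 hrest3 =>
              obtain ⟨rfl,rfl⟩ := stepWB _ _ htr3
              cases hrest3 with
              | nil =>
                exact ⟨2, Or.inr rfl, E210, exec210,
                  EqvClosure.trans (EqvClosure.rel swap102_120) (EqvClosure.rel swap120_210),
                  (2,(false,false,true)), _, rfl, rfl⟩
              | cons htr4 _ => exact (stepT _ _ htr4).elim
          · cases hrest2 with
            | nil => exact absurd ⟨0,(true,true,true),⟨rfl,rfl⟩,rfl⟩ (hfin 0)
            | cons htr3 hrest3 =>
              obtain ⟨rfl,rfl⟩ := stepBC _ _ htr3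
              cases hrest3 with
              | nil =>
                exact ⟨2, Or.inr rfl, E210, exec210, EqvClosure.rel swap120_210,
                  (2,(false,false,true)), _, rfl, rfl⟩
              | cons htr4 _ => exact (stepT _ _ htr4).elim
      · -- first action 2
        cases hrest with
        | nil => exact absurd ⟨0,(true,false,true),⟨rfl,rfl⟩,rfl⟩ (hfin 0)
        | cons htr2 hrest2 =>
          rcases stepC _ _ htr2 with ⟨rfl,rfl⟩ | ⟨rfl,rfl⟩
          · cases hrest2 with
            | nil => exact absurd ⟨1,(true,true,true),⟨rfl,rfl⟩,rfl⟩ (hfin 1)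
            | cons htr3 hrest3 =>
              obtain ⟨rfl,rfl⟩ := stepWC _ _ htr3
              cases hrest3 with
              | nil => exact ⟨2, Or.inr rfl, wi_self E201 exec201 _ _ rfl⟩
              | cons htr4 _ => exact (stepT _ _ htr4).elim
          · cases hrest2 with
            | nil => exact absurd ⟨0,(true,true,true),⟨rfl,rfl⟩,rfl⟩ (hfin 0)
            | cons htr3 hrest3 =>
              obtain ⟨rfl,rfl⟩ := stepBC _ _ htr3
              cases hrest3 with
              | nil => exact ⟨2, Or.inr rfl, wi_self E210 exec210 _ _ rfl⟩
              | cons htr4 _ => exact (stepT _ _ htr4).elim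
  · -- not persistent
    rintro ⟨-, h⟩
    have hE : L3.IsExec s0 [((1:Fin 3), ((false,true,false):S3))] :=
      ExecOf.cons ⟨rfl,rfl⟩ (ExecOf.nil _)
    have hmem : ((1:Fin 3), ((false,true,false):S3)) ∈
        [((1:Fin 3), ((false,true,false):S3))] := List.mem_singleton.mpr rfl
    have hout : ∀ p ∈ [((1:Fin 3), ((false,true,false):S3))], L3.tid p.1 ∉ Q3 := by
      intro p hp hq
      rw [List.mem_singleton] at hp
      subst hp
      exact (by decide : ¬((1:Fin 3) = 0 ∨ (1:Fin 3) = 2)) hq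
    have := h _ hE hout _ hmem 0 (Or.inl rfl) 0 (true,false,false) ⟨rfl,rfl⟩ rfl
    exact (by decide : ¬ ind3 1 0) this
end
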